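/- Power iteration on a symmetric positive semidefinite matrix A = JᵀJ: if the top eigenvalue λ₁ of A is strictly larger in absolute value than all others and the initial unit vector v₀ has nonzero component along the top eigenspace, then the normalized iterates vₖ₊₁ = A vₖ / ‖A vₖ‖ satisfy that ‖J vₖ‖ converges to the largest singular value σ_max(J) = √λ₁ as k → ∞. -/

import Mathlib

open Matrix RealInnerProductSpace Filter
open scoped Topology

/-!
Write `v₀ = ∑ cᵢ eᵢ` in the eigenbasis. From the first step on, `vₖ` is the normalisation of
`Aᵏ v₀ = ∑ cᵢ λᵢᵏ eᵢ`, so `‖J vₖ‖² = ⟪vₖ, A vₖ⟫` is the Rayleigh quotient of `Aᵏ v₀`, namely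
`∑ cᵢ² λᵢ^(2k+1) / ∑ cᵢ² λᵢ^(2k)`. After dividing numerator and denominator by `λ₁^(2k)` every
term with `i ≠ 1` decays geometrically, and the quotient tends to `c₁² λ₁ / c₁² = λ₁`.
-/

theorem Matrix.inner_toEuclideanLin_transpose_mul_self {m n : Type*} [Fintype m] [Fintype n]
    [DecidableEq m] [DecidableEq n] (J : Matrix m n ℝ) (x : EuclideanSpace ℝ n) :
    ⟪x, toEuclideanLin (Jᵀ * J) x⟫ = ‖toEuclideanLin J x‖ ^ 2 := by
  rw [toLpLin_mul_same, ← conjTranspose_eq_transpose_of_trivial,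
    toEuclideanLin_conjTranspose_eq_adjoint, LinearMap.comp_apply, LinearMap.adjoint_inner_right,
    real_inner_self_eq_norm_sq]

theorem inv_norm_smul_smul_of_pos {E : Type*} [NormedAddCommGroup E] [NormedSpace ℝ E]
    {s : ℝ} (hs : 0 < s) (x : E) : ‖s • x‖⁻¹ • s • x = ‖x‖⁻¹ • x := by
  rw [norm_smul, Real.norm_of_nonneg hs.le, smul_smul, mul_inv, mul_right_comm,
    inv_mul_cancel₀ hs.ne', one_mul]

theorem iterate_succ_eq_inv_norm_smul_pow_apply {E : Type*} [NormedAddCommGroup E]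
    [NormedSpace ℝ E] (T : Module.End ℝ E) (v : ℕ → E) (hne : ∀ k, T (v k) ≠ 0)
    (hiter : ∀ k, v (k + 1) = ‖T (v k)‖⁻¹ • T (v k)) (k : ℕ) :
    v (k + 1) = ‖(T ^ (k + 1)) (v 0)‖⁻¹ • (T ^ (k + 1)) (v 0) := by
  induction k with
  | zero => rw [hiter, pow_one]
  | succ k ih =>
    have hpos : 0 < ‖(T ^ (k + 1)) (v 0)‖⁻¹ := by
      refine inv_pos.2 (norm_pos_iff.2 fun h => hne (k + 1) ?_)
      rw [ih, h, smul_zero, map_zero]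
    rw [hiter, ih, map_smul, ← Module.End.mul_apply, ← pow_succ', inv_norm_smul_smul_of_pos hpos]

theorem inner_inv_norm_smul_map_inv_norm_smul {E : Type*} [NormedAddCommGroup E]
    [InnerProductSpace ℝ E] (T : Module.End ℝ E) (w : E) :
    ⟪‖w‖⁻¹ • w, T (‖w‖⁻¹ • w)⟫ = ⟪w, T w⟫ / ⟪w, w⟫ := by
  rw [map_smul, real_inner_smul_left, real_inner_smul_right, real_inner_self_eq_norm_sq]
  field_simp

section Eigenbasis

variable {ι E : Type*} [Fintype ι] [NormedAddCommGroup E] [InnerProductSpace ℝ E]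
  (b : OrthonormalBasis ι ℝ E) {T : Module.End ℝ E} {lam : ι → ℝ}

theorem OrthonormalBasis.pow_apply_eq_sum_of_apply_eq_smul (hT : ∀ i, T (b i) = lam i • b i)
    (k : ℕ) (x : E) : (T ^ k) x = ∑ i, (lam i ^ k * ⟪b i, x⟫) • b i := by
  have hpow : ∀ i, (T ^ k) (b i) = lam i ^ k • b i := fun i =>
    Module.End.HasEigenvector.pow_apply
      ⟨Module.End.mem_eigenspace_iff.2 (hT i), b.orthonormal.ne_zero i⟩ k
  conv_lhs => rw [← b.sum_repr' x]
  simp only [map_sum, map_smul, hpow, smul_smul, mul_comm]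

theorem OrthonormalBasis.inner_pow_apply_pow_apply_of_apply_eq_smul
    (hT : ∀ i, T (b i) = lam i • b i) (k l : ℕ) (x : E) :
    ⟪(T ^ k) x, (T ^ l) x⟫ = ∑ i, ⟪b i, x⟫ ^ 2 * lam i ^ (k + l) := by
  rw [b.pow_apply_eq_sum_of_apply_eq_smul hT, b.pow_apply_eq_sum_of_apply_eq_smul hT,
    b.orthonormal.inner_sum]
  refine Finset.sum_congr rfl fun i _ => ?_
  simp only [conj_trivial]
  ring

end Eigenbasis

theorem tendsto_sum_mul_pow_of_abs_lt_one {ι : Type*} [Fintype ι] (f q : ι → ℝ) {i₀ : ι}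
    (hq₀ : q i₀ = 1) (hq : ∀ i ≠ i₀, |q i| < 1) :
    Tendsto (fun k => ∑ i, f i * q i ^ k) atTop (𝓝 (f i₀)) := by
  classical
  have hlim : ∀ i, Tendsto (fun k => f i * q i ^ k) atTop (𝓝 (if i = i₀ then f i₀ else 0)) := by
    intro i
    split_ifs with hi
    · subst hi; simp [hq₀]
    · simpa using (tendsto_pow_atTop_nhds_zero_of_abs_lt_one (hq i hi)).const_mul (f i)
  simpa using tendsto_finsetSum Finset.univ fun i _ => hlim i

theorem tendsto_sum_mul_pow_succ_div_sum_mul_pow {ι : Type*} [Fintype ι] (c lam : ι → ℝ)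
    {i₀ : ι} (hc : c i₀ ≠ 0) (hlam : lam i₀ ≠ 0) (hdom : ∀ i ≠ i₀, |lam i| < |lam i₀|) :
    Tendsto (fun k => (∑ i, c i * lam i ^ (2 * k + 1)) / ∑ i, c i * lam i ^ (2 * k)) atTop
      (𝓝 (lam i₀)) := by
  set q : ι → ℝ := fun i => (lam i / lam i₀) ^ 2
  have hpow : ∀ i k, lam i ^ (2 * k) = (lam i₀ ^ 2) ^ k * q i ^ k := by
    intro i k
    simp only [q]
    rw [← mul_pow, ← mul_pow, mul_div_cancel₀ _ hlam, ← pow_mul]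
  have hq : ∀ i ≠ i₀, |q i| < 1 := by
    intro i hi
    rw [abs_of_nonneg (sq_nonneg _), sq_lt_one_iff_abs_lt_one, abs_div,
      div_lt_one (abs_pos.2 hlam)]
    exact hdom i hi
  have hq₀ : q i₀ = 1 := by simp [q, hlam]
  have hratio : ∀ k, (∑ i, c i * lam i ^ (2 * k + 1)) / ∑ i, c i * lam i ^ (2 * k) =
      (∑ i, c i * lam i * q i ^ k) / ∑ i, c i * q i ^ k := by
    intro k
    have hnum :
        ∑ i, c i * lam i ^ (2 * k + 1) = (lam i₀ ^ 2) ^ k * ∑ i, c i * lam i * q i ^ k := by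
      rw [Finset.mul_sum]
      refine Finset.sum_congr rfl fun i _ => ?_
      rw [pow_succ, hpow]
      ring
    have hden : ∑ i, c i * lam i ^ (2 * k) = (lam i₀ ^ 2) ^ k * ∑ i, c i * q i ^ k := by
      rw [Finset.mul_sum]
      refine Finset.sum_congr rfl fun i _ => ?_
      rw [hpow]
      ring
    rw [hnum, hden, mul_div_mul_left _ _ (by positivity)]
  have := (tendsto_sum_mul_pow_of_abs_lt_one (fun i => c i * lam i) q hq₀ hq).div
    (tendsto_sum_mul_pow_of_abs_lt_one c q hq₀ hq) hc
  rw [mul_div_cancel_left₀ _ hc] at this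
  exact this.congr fun k => (hratio k).symm

theorem power_iteration_tendsto_max_singular_value_general {m n : ℕ}
    (J : Matrix (Fin m) (Fin n) ℝ) [NeZero n]
    (lam : Fin n → ℝ) (e : Fin n → EuclideanSpace ℝ (Fin n))
    (he : Orthonormal ℝ e)
    (heig : ∀ i, Matrix.toEuclideanLin (Jᵀ * J) (e i) = lam i • e i)
    (htop : ∀ i : Fin n, i ≠ 0 → |lam i| < lam 0)
    (v : ℕ → EuclideanSpace ℝ (Fin n))
    (hcomp : ⟪v 0, e 0⟫ ≠ 0)
    (hne : ∀ k, Matrix.toEuclideanLin (Jᵀ * J) (v k) ≠ 0)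
    (hiter : ∀ k, v (k + 1) =
      ‖Matrix.toEuclideanLin (Jᵀ * J) (v k)‖⁻¹ • Matrix.toEuclideanLin (Jᵀ * J) (v k)) :
    Tendsto (fun k => ‖Matrix.toEuclideanLin J (v k)‖) atTop
      (nhds (Real.sqrt (lam 0))) := by
  set T := toEuclideanLin (Jᵀ * J)
  have hspan := (he.linearIndependent.span_eq_top_of_card_eq_finrank (by simp)).ge
  set b := OrthonormalBasis.mk he hspan
  have hb : ⇑b = e := OrthonormalBasis.coe_mk he hspan
  have hTb : ∀ i, T (b i) = lam i • b i := by rw [hb]; exact heig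
  have hlam : lam 0 ≠ 0 := by
    -- otherwise `htop` leaves no room for a nonzero eigenvalue, so `T = 0`
    intro h0
    have hT : T = 0 := b.toBasis.ext fun i => by
      obtain rfl | hi := eq_or_ne i 0
      · simp [hTb, h0]
      · exact absurd (htop i hi) (by simp [h0])
    exact hne 0 (by rw [hT, LinearMap.zero_apply])
  have hc : ⟪b 0, v 0⟫ ^ 2 ≠ 0 := pow_ne_zero 2 (by rwa [hb, real_inner_comm])
  have hsq : ∀ k, ‖toEuclideanLin J (v (k + 1))‖ ^ 2 =
      (∑ i, ⟪b i, v 0⟫ ^ 2 * lam i ^ (2 * (k + 1) + 1)) /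
        ∑ i, ⟪b i, v 0⟫ ^ 2 * lam i ^ (2 * (k + 1)) := by
    intro k
    rw [← inner_toEuclideanLin_transpose_mul_self,
      iterate_succ_eq_inv_norm_smul_pow_apply T v hne hiter,
      inner_inv_norm_smul_map_inv_norm_smul, ← Module.End.mul_apply, ← pow_succ',
      b.inner_pow_apply_pow_apply_of_apply_eq_smul hTb,
      b.inner_pow_apply_pow_apply_of_apply_eq_smul hTb]
    simp only [two_mul, add_assoc]
  have hdom : ∀ i ≠ 0, |lam i| < |lam 0| := fun i hi => (htop i hi).trans_le (le_abs_self _)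
  have hlim := (tendsto_sum_mul_pow_succ_div_sum_mul_pow (fun i => ⟪b i, v 0⟫ ^ 2) lam hc hlam
    hdom).comp (tendsto_add_atTop_nat 1)
  rw [← tendsto_add_atTop_iff_nat 1]
  refine hlim.sqrt.congr fun k => ?_
  rw [Function.comp_apply, ← hsq, Real.sqrt_sq (norm_nonneg _)]

theorem power_iteration_tendsto_max_singular_value {m n : ℕ}
    (J : Matrix (Fin m) (Fin n) ℝ) [NeZero n]
    (lam : Fin n → ℝ) (e : Fin n → EuclideanSpace ℝ (Fin n))
    (he : Orthonormal ℝ e)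
    (heig : ∀ i, Matrix.toEuclideanLin (Jᵀ * J) (e i) = lam i • e i)
    (hnonneg : ∀ i, 0 ≤ lam i)
    (htop : ∀ i : Fin n, i ≠ 0 → |lam i| < lam 0)
    (v : ℕ → EuclideanSpace ℝ (Fin n))
    (hv0 : ‖v 0‖ = 1)
    (hcomp : ⟪v 0, e 0⟫ ≠ 0)
    (hne : ∀ k, Matrix.toEuclideanLin (Jᵀ * J) (v k) ≠ 0)
    (hiter : ∀ k, v (k + 1) =
      ‖Matrix.toEuclideanLin (Jᵀ * J) (v k)‖⁻¹ • Matrix.toEuclideanLin (Jᵀ * J) (v k)) :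
    Tendsto (fun k => ‖Matrix.toEuclideanLin J (v k)‖) atTop
      (nhds (Real.sqrt (lam 0))) :=
  power_iteration_tendsto_max_singular_value_general J lam e he heig htop v hcomp hne hiter
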